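/- Soundness of syntactic subtyping: (1) if t ≤ u (as a circular derivation) then for all k and v, v ∈_k t implies v ∈_k u, hence t ⊆ u semantically; (2) if s ≤ r then for all k and e, e ∈_k s implies e ∈_k r, hence s ⊆ r semantically. -/

import Mathlib

namespace CBPV

abbrev Label := String
abbrev Var := String

-- Positive types (values); `name` refers to an equirecursively defined type name.
mutual
inductive PosTp : Type where
  | name : String → PosTp
  | str  : PosStr → PosTp

/-- Structural positive types. -/
inductive PosStr : Type where
  | tensor : PosTp → PosTp → PosStr
  | one    : PosStr
  | plus   : List (Label × PosTp) → PosStr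
  | down   : NegTp → PosStr

/-- Negative types (computations). -/
inductive NegTp : Type where
  | name : String → NegTp
  | str  : NegStr → NegTp

/-- Structural negative types. -/
inductive NegStr : Type where
  | arrow   : PosTp → NegTp → NegStr
  | withRec : List (Label × NegTp) → NegStr
  | up      : PosTp → NegStr
end

mutual
/-- Values. -/
inductive Val : Type where
  | var   : Var → Val
  | pair  : Val → Val → Val
  | unit  : Val
  | inj   : Label → Val → Val
  | thunk : Comp → Val

/-- Computations. -/
inductive Comp : Type where
  | lam       : Var → Comp → Comp
  | app       : Comp → Val → Comp
  | record    : List (Label × Comp) → Comp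
  | proj      : Comp → Label → Comp
  | ret       : Val → Comp
  | letret    : Var → Comp → Comp → Comp
  | name      : String → Comp
  | matchPair : Val → Var → Var → Comp → Comp
  | matchUnit : Val → Comp → Comp
  | matchSum  : Val → List (Label × Var × Comp) → Comp
  | force     : Val → Comp
end

/-- A global signature: equirecursive (contractive) type definitions `t = τ⁺`,
`s = σ⁻`, and recursive expression definitions `f : σ⁻ = e`. -/
structure Signature : Type where
  pos  : String → PosStr
  neg  : String → NegStr
  defs : String → NegTp × Comp

mutual
/-- Substitution of value `w` for variable `x` in a value. -/
def substV (w : Val) (x : Var) : Val → Val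
  | .var y => if y = x then w else .var y
  | .pair v₁ v₂ => .pair (substV w x v₁) (substV w x v₂)
  | .unit => .unit
  | .inj j v => .inj j (substV w x v)
  | .thunk e => .thunk (substC w x e)

/-- Substitution of value `w` for variable `x` in a computation. -/
def substC (w : Val) (x : Var) : Comp → Comp
  | .lam y e => .lam y (if y = x then e else substC w x e)
  | .app e v => .app (substC w x e) (substV w x v)
  | .record L => .record (substRec w x L)
  | .proj e j => .proj (substC w x e) j
  | .ret v => .ret (substV w x v)
  | .letret y e₁ e₂ => .letret y (substC w x e₁) (if y = x then e₂ else substC w x e₂)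
  | .name f => .name f
  | .matchPair v y z e =>
      .matchPair (substV w x v) y z (if y = x ∨ z = x then e else substC w x e)
  | .matchUnit v e => .matchUnit (substV w x v) (substC w x e)
  | .matchSum v B => .matchSum (substV w x v) (substBr w x B)
  | .force v => .force (substV w x v)

def substRec (w : Val) (x : Var) : List (Label × Comp) → List (Label × Comp)
  | [] => []
  | (l, e) :: rest => (l, substC w x e) :: substRec w x rest

def substBr (w : Val) (x : Var) : List (Label × Var × Comp) → List (Label × Var × Comp)
  | [] => []
  | (l, y, e) :: rest =>
      (l, y, if y = x then e else substC w x e) :: substBr w x rest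
end

/-- Terminal computations. -/
inductive Terminal : Comp → Prop where
  | lam    : Terminal (.lam x e)
  | record : Terminal (.record L)
  | ret    : Terminal (.ret v)

/-- Small-step dynamics of call-by-push-value, relative to a signature. -/
inductive Step (Sg : Signature) : Comp → Comp → Prop where
  | beta       : Step Sg (.app (.lam x e) v) (substC v x e)
  | app        : Step Sg e e' → Step Sg (.app e v) (.app e' v)
  | letretBeta : Step Sg (.letret x (.ret v) e₂) (substC v x e₂)
  | letretStep : Step Sg e₁ e₁' → Step Sg (.letret x e₁ e₂) (.letret x e₁' e₂)
  | projBeta   : L.lookup j = some e → Step Sg (.proj (.record L) j) e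
  | projStep   : Step Sg e e' → Step Sg (.proj e j) (.proj e' j)
  | matchPair  : Step Sg (.matchPair (.pair v₁ v₂) x y e) (substC v₁ x (substC v₂ y e))
  | matchUnit  : Step Sg (.matchUnit .unit e) e
  | matchSum   : B.lookup j = some (x, ej) → Step Sg (.matchSum (.inj j v) B) (substC v x ej)
  | force      : Step Sg (.force (.thunk e)) e
  | name       : Sg.defs f = (σ, e) → Step Sg (.name f) e

end CBPV

namespace CBPV

/-- Unfold a positive type to a structural type using the signature
(equirecursive type definitions). -/
def unfP (Sg : Signature) : PosTp → PosStr
  | .name t => Sg.pos t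
  | .str τ => τ

/-- Unfold a negative type to a structural type using the signature. -/
def unfN (Sg : Signature) : NegTp → NegStr
  | .name s => Sg.neg s
  | .str σ => σ

/-- Step-indexed semantic typing of values against structural positive types,
parametrized by the semantic typing `SC` of computations (at the same index). -/
def SemValS (Sg : Signature) (SC : Comp → NegTp → Prop) : Val → PosStr → Prop
  | .pair v₁ v₂, .tensor τ₁ τ₂ =>
      SemValS Sg SC v₁ (unfP Sg τ₁) ∧ SemValS Sg SC v₂ (unfP Sg τ₂)
  | .unit, .one => True
  | .inj j v, .plus L => ∃ τ, L.lookup j = some τ ∧ SemValS Sg SC v (unfP Sg τ)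
  | .thunk e, .down σ => SC e σ
  | _, _ => False

mutual
/-- `SemComp Sg k e σ` is the step-indexed semantic typing `e ∈_k σ⁻`:
`e ∈_0 σ⁻` always, and `e ∈_{k+1} σ⁻` iff either `e ↦ e'` with `e' ∈_k σ⁻`,
or `e` is terminal and `e ∈⊛_{k+1} σ⁻`. -/
def SemComp (Sg : Signature) : ℕ → Comp → NegTp → Prop
  | 0, _, _ => True
  | k+1, e, σ =>
      (∃ e', Step Sg e e' ∧ SemComp Sg k e' σ) ∨
      (Terminal e ∧ SemTerm Sg (k+1) e σ)
termination_by k e σ => (k, 1)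

/-- `SemTerm Sg (k+1) e σ` is the semantic typing `e ∈⊛_{k+1} σ⁻` of terminal
computations.  Since applications `e v` and projections `e.j` are never
terminal, the requirements `e v ∈_{k+1} σ` and `e.j ∈_{k+1} σ_j` are stated in
their (equivalent) unfolded form: the application/projection takes a step to a
computation in the type at index `k`. -/
def SemTerm (Sg : Signature) : ℕ → Comp → NegTp → Prop
  | 0, _, _ => True
  | k+1, e, σ =>
      match unfN Sg σ with
      | .arrow τ σ₂ =>
          ∀ i, i ≤ k → ∀ v, SemValS Sg (SemComp Sg i) v (unfP Sg τ) →
            ∃ e'', Step Sg (.app e v) e'' ∧ SemComp Sg k e'' σ₂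
      | .withRec K =>
          ∀ j σj, K.lookup j = some σj →
            ∃ e'', Step Sg (.proj e j) e'' ∧ SemComp Sg k e'' σj
      | .up τ => ∃ v, e = .ret v ∧ SemValS Sg (SemComp Sg k) v (unfP Sg τ)
termination_by k e σ => (k, 0)
end

/-- `v ∈_k τ⁺`: step-indexed semantic typing of values. -/
def SemVal (Sg : Signature) (k : ℕ) (v : Val) (τ : PosTp) : Prop :=
  SemValS Sg (SemComp Sg k) v (unfP Sg τ)

/-- `v ∈ τ⁺`: semantic typing of values (at every step index). -/
def SemValAll (Sg : Signature) (v : Val) (τ : PosTp) : Prop :=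
  ∀ k, SemVal Sg k v τ

/-- `e ∈ σ⁻`: semantic typing of computations (at every step index). -/
def SemCompAll (Sg : Signature) (e : Comp) (σ : NegTp) : Prop :=
  ∀ k, SemComp Sg k e σ

end CBPV

namespace CBPV

def PosTp.IsName : PosTp → Prop := fun τ => ∃ t, τ = .name t
def NegTp.IsName : NegTp → Prop := fun σ => ∃ s, σ = .name s

/-- A structural positive type is in normal form if all of its components are
type names, and its label lists have no duplicate labels. -/
def PosStrNormal : PosStr → Prop
  | .tensor τ₁ τ₂ => τ₁.IsName ∧ τ₂.IsName
  | .one => True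
  | .plus L => (∀ p ∈ L, (Prod.snd p).IsName) ∧ (L.map Prod.fst).Nodup
  | .down σ => σ.IsName

def NegStrNormal : NegStr → Prop
  | .arrow τ σ => τ.IsName ∧ σ.IsName
  | .withRec L => (∀ p ∈ L, (Prod.snd p).IsName) ∧ (L.map Prod.fst).Nodup
  | .up τ => τ.IsName

/-- A signature is in normal form when every type definition alternates between
type names and structural types, i.e. the components of every defined
structural type are themselves type names. -/
def SigNormal (Sg : Signature) : Prop :=
  (∀ t, PosStrNormal (Sg.pos t)) ∧ (∀ s, NegStrNormal (Sg.neg s))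

/-- One unfolding of the rules for the emptiness judgment `t empty`. -/
def EmptyUnf (Sg : Signature) (S : String → Prop) (t : String) : Prop :=
  (∃ L, Sg.pos t = .plus L ∧
     ∀ p ∈ L, ∃ tj, Prod.snd p = PosTp.name tj ∧ S tj) ∨
  (∃ t₁ t₂, Sg.pos t = .tensor (.name t₁) (.name t₂) ∧ (S t₁ ∨ S t₂))

/-- `t empty`: the greatest fixed point (circular derivations) of the
emptiness rules. -/
def TpEmpty (Sg : Signature) (t : String) : Prop :=
  ∃ S : String → Prop, (∀ u, S u → EmptyUnf Sg S u) ∧ S t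

/-- `s full`: `s = t₁ → s₂ ∈ Σ` with `t₁ empty`, or `s = &{} ∈ Σ`. -/
def TpFull (Sg : Signature) (s : String) : Prop :=
  (∃ t₁ s₂, Sg.neg s = .arrow (.name t₁) (.name s₂) ∧ TpEmpty Sg t₁) ∨
  Sg.neg s = .withRec []

/-- One unfolding of the rules for positive subtyping `t ≤ u` between
positive type names. -/
def PosSubUnf (Sg : Signature) (P N : String → String → Prop) (t u : String) : Prop :=
  (∃ t₁ t₂ u₁ u₂, Sg.pos t = .tensor (.name t₁) (.name t₂) ∧
     Sg.pos u = .tensor (.name u₁) (.name u₂) ∧ P t₁ u₁ ∧ P t₂ u₂) ∨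
  (Sg.pos t = .one ∧ Sg.pos u = .one) ∨
  (∃ L K, Sg.pos t = .plus L ∧ Sg.pos u = .plus K ∧
     ∀ p ∈ L, ∃ tj, Prod.snd p = PosTp.name tj ∧
       (TpEmpty Sg tj ∨ ∃ uj, K.lookup (Prod.fst p) = some (PosTp.name uj) ∧ P tj uj)) ∨
  (∃ s r, Sg.pos t = .down (.name s) ∧ Sg.pos u = .down (.name r) ∧ N s r) ∨
  TpEmpty Sg t

/-- One unfolding of the rules for negative subtyping `s ≤ r` between
negative type names. -/
def NegSubUnf (Sg : Signature) (P N : String → String → Prop) (s r : String) : Prop :=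
  (∃ t₁ s₂ u₁ r₂, Sg.neg s = .arrow (.name t₁) (.name s₂) ∧
     Sg.neg r = .arrow (.name u₁) (.name r₂) ∧ P u₁ t₁ ∧ N s₂ r₂) ∨
  (∃ t u, Sg.neg s = .up (.name t) ∧ Sg.neg r = .up (.name u) ∧ P t u) ∨
  (∃ L K, Sg.neg s = .withRec L ∧ Sg.neg r = .withRec K ∧
     ∀ p ∈ K, ∃ rj, Prod.snd p = NegTp.name rj ∧
       ∃ sj, L.lookup (Prod.fst p) = some (NegTp.name sj) ∧ N sj rj) ∨
  (∃ t, Sg.neg s = .up (.name t) ∧ TpEmpty Sg t) ∨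
  TpFull Sg r

/-- `t ≤ u`: syntactic subtyping between positive type names, interpreted as
circular derivations (greatest fixed point of the subtyping rules). -/
def PosSub (Sg : Signature) (t u : String) : Prop :=
  ∃ P N : String → String → Prop,
    (∀ a b, P a b → PosSubUnf Sg P N a b) ∧
    (∀ a b, N a b → NegSubUnf Sg P N a b) ∧ P t u

/-- `s ≤ r`: syntactic subtyping between negative type names, interpreted as
circular derivations (greatest fixed point of the subtyping rules). -/
def NegSub (Sg : Signature) (s r : String) : Prop :=
  ∃ P N : String → String → Prop,
    (∀ a b, P a b → PosSubUnf Sg P N a b) ∧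
    (∀ a b, N a b → NegSubUnf Sg P N a b) ∧ N s r

end CBPV

namespace CBPV

/-- Semantic subtyping between positive type names: every semantically typed
value of `t` is a semantically typed value of `u`. -/
def SemSubPos (Sg : Signature) (t u : String) : Prop :=
  ∀ v : Val, SemValAll Sg v (.name t) → SemValAll Sg v (.name u)

/-- Semantic subtyping between negative type names. -/
def SemSubNeg (Sg : Signature) (s r : String) : Prop :=
  ∀ e : Comp, SemCompAll Sg e (.name s) → SemCompAll Sg e (.name r)
/-!
Fix a post-fixed point `(P, N)` of the subtyping rules; we show that every pair in `P` or `N` is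
a semantic inclusion at every step index `k`. Empty types have no semantic values, which
discharges the emptiness and fullness rules. For the structural rules the negative inclusion at
index `k + 1` follows from the negative one at `k` and the positive ones at all `i ≤ k` (the
semantics of an arrow quantifies over all smaller indices, with the domain contravariant), and the
positive inclusion at `k` follows, by recursion on the value, from the negative one at `k`.
So strong induction on `k` proves both.
-/

theorem List.mem_of_lookup_eq_some {α β : Type} [BEq α] [LawfulBEq α] {l : List (α × β)}
    {a : α} {b : β} (h : l.lookup a = some b) : (a, b) ∈ l := by
  obtain ⟨l₁, l₂, rfl, -⟩ := List.lookup_eq_some_iff.mp h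
  simp

section Semantics

variable {Sg : Signature}

theorem not_semValS_of_emptyUnf {S : String → Prop} (hS : ∀ u, S u → EmptyUnf Sg S u)
    (SC : Comp → NegTp → Prop) : ∀ (v : Val) (t : String), S t → ¬ SemValS Sg SC v (Sg.pos t)
  | .pair v₁ v₂, t, hSt, hv => by
    rcases hS t hSt with ⟨L, ht, -⟩ | ⟨t₁, t₂, ht, ht₁ | ht₂⟩ <;>
      simp only [ht, SemValS, unfP] at hv
    · exact not_semValS_of_emptyUnf hS SC v₁ t₁ ht₁ hv.1
    · exact not_semValS_of_emptyUnf hS SC v₂ t₂ ht₂ hv.2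
  | .inj j w, t, hSt, hv => by
    rcases hS t hSt with ⟨L, ht, hL⟩ | ⟨t₁, t₂, ht, -⟩ <;>
      simp only [ht, SemValS] at hv
    obtain ⟨τ, hlk, hw⟩ := hv
    obtain ⟨tj, rfl, htj⟩ := hL (j, τ) (List.mem_of_lookup_eq_some hlk)
    exact not_semValS_of_emptyUnf hS SC w tj htj hw
  | .var _, t, hSt, hv | .unit, t, hSt, hv | .thunk _, t, hSt, hv => by
    rcases hS t hSt with ⟨L, ht, -⟩ | ⟨t₁, t₂, ht, -⟩ <;> simp [ht, SemValS] at hv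

theorem TpEmpty.not_semValS {t : String} (h : TpEmpty Sg t) (SC : Comp → NegTp → Prop)
    (v : Val) : ¬ SemValS Sg SC v (Sg.pos t) :=
  let ⟨_, hS, ht⟩ := h
  not_semValS_of_emptyUnf hS SC v t ht

theorem semComp_succ_of_semTerm {k : ℕ} {σ σ' : NegTp}
    (hstep : ∀ e, SemComp Sg k e σ → SemComp Sg k e σ')
    (hterm : ∀ e, SemTerm Sg (k + 1) e σ → SemTerm Sg (k + 1) e σ')
    {e : Comp} (he : SemComp Sg (k + 1) e σ) : SemComp Sg (k + 1) e σ' := by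
  rw [SemComp] at he ⊢
  rcases he with ⟨e', hst, he'⟩ | ⟨he_term, he'⟩
  · exact .inl ⟨e', hst, hstep e' he'⟩
  · exact .inr ⟨he_term, hterm e he'⟩

theorem semComp_of_semTerm {σ σ' : NegTp}
    (hterm : ∀ k e, SemTerm Sg (k + 1) e σ → SemTerm Sg (k + 1) e σ') :
    ∀ k e, SemComp Sg k e σ → SemComp Sg k e σ'
  | 0, _, _ => by simp [SemComp]
  | k + 1, _, he => semComp_succ_of_semTerm (semComp_of_semTerm hterm k) (hterm k) he

theorem TpFull.semTerm {r : String} (h : TpFull Sg r) (k : ℕ) (e : Comp) :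
    SemTerm Sg (k + 1) e (.name r) := by
  rw [SemTerm]
  rcases h with ⟨t₁, s₂, hr, ht₁⟩ | hr <;> simp only [unfN, hr]
  · exact fun i _ v hv => (ht₁.not_semValS _ v hv).elim
  · simp

theorem TpFull.semComp {r : String} (h : TpFull Sg r) {σ : NegTp} :
    ∀ k e, SemComp Sg k e σ → SemComp Sg k e (.name r) :=
  semComp_of_semTerm fun k e _ => h.semTerm k e

theorem TpEmpty.not_semTerm_up {s t : String} (hs : Sg.neg s = .up (.name t))
    (ht : TpEmpty Sg t) (k : ℕ) (e : Comp) : ¬ SemTerm Sg (k + 1) e (.name s) := by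
  rw [SemTerm]
  simp only [unfN, hs, not_exists, not_and]
  exact fun v _ hv => ht.not_semValS _ v hv

theorem TpEmpty.semComp_up {s t : String} (hs : Sg.neg s = .up (.name t))
    (ht : TpEmpty Sg t) {σ : NegTp} : ∀ k e, SemComp Sg k e (.name s) → SemComp Sg k e σ :=
  semComp_of_semTerm fun k e he => absurd he (ht.not_semTerm_up hs k e)

theorem semTerm_arrow_mono {a b t₁ s₂ u₁ r₂ : String} {k : ℕ} {e : Comp}
    (ha : Sg.neg a = .arrow (.name t₁) (.name s₂))
    (hb : Sg.neg b = .arrow (.name u₁) (.name r₂))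
    (hdom : ∀ i ≤ k, ∀ v, SemVal Sg i v (.name u₁) → SemVal Sg i v (.name t₁))
    (hcod : ∀ e', SemComp Sg k e' (.name s₂) → SemComp Sg k e' (.name r₂))
    (he : SemTerm Sg (k + 1) e (.name a)) : SemTerm Sg (k + 1) e (.name b) := by
  rw [SemTerm] at he ⊢
  simp only [unfN, ha, hb] at he ⊢
  intro i hi v hv
  obtain ⟨e', hst, he'⟩ := he i hi v (hdom i hi v hv)
  exact ⟨e', hst, hcod e' he'⟩

theorem semTerm_up_mono {a b t u : String} {k : ℕ} {e : Comp}
    (ha : Sg.neg a = .up (.name t)) (hb : Sg.neg b = .up (.name u))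
    (hval : ∀ v, SemVal Sg k v (.name t) → SemVal Sg k v (.name u))
    (he : SemTerm Sg (k + 1) e (.name a)) : SemTerm Sg (k + 1) e (.name b) := by
  rw [SemTerm] at he ⊢
  simp only [unfN, ha, hb] at he ⊢
  obtain ⟨v, rfl, hv⟩ := he
  exact ⟨v, rfl, hval v hv⟩

theorem semTerm_withRec_mono {a b : String} {L K : List (Label × NegTp)} {k : ℕ} {e : Comp}
    (ha : Sg.neg a = .withRec L) (hb : Sg.neg b = .withRec K)
    (hK : ∀ p ∈ K, ∃ rj, p.2 = .name rj ∧ ∃ sj, L.lookup p.1 = some (.name sj) ∧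
      ∀ e', SemComp Sg k e' (.name sj) → SemComp Sg k e' (.name rj))
    (he : SemTerm Sg (k + 1) e (.name a)) : SemTerm Sg (k + 1) e (.name b) := by
  rw [SemTerm] at he ⊢
  simp only [unfN, ha, hb] at he ⊢
  intro j σj hj
  obtain ⟨rj, rfl, sj, hsj, hsub⟩ := hK (j, σj) (List.mem_of_lookup_eq_some hj)
  obtain ⟨e', hst, he'⟩ := he j (.name sj) hsj
  exact ⟨e', hst, hsub e' he'⟩

end Semantics

section Soundness

variable {Sg : Signature} {P N : String → String → Prop}
  (hPfix : ∀ a b, P a b → PosSubUnf Sg P N a b) (hNfix : ∀ a b, N a b → NegSubUnf Sg P N a b)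
include hPfix

theorem semValS_of_posSubUnf_closed {SC : Comp → NegTp → Prop}
    (hneg : ∀ a b, N a b → ∀ e, SC e (.name a) → SC e (.name b)) :
    ∀ v a b, P a b → SemValS Sg SC v (Sg.pos a) → SemValS Sg SC v (Sg.pos b)
  | v, a, b, hab, hv => by
    rcases hPfix a b hab with ⟨t₁, t₂, u₁, u₂, ha, hb, h₁, h₂⟩ | ⟨ha, hb⟩ | ⟨L, K, ha, hb, hL⟩ |
      ⟨s, r, ha, hb, hsr⟩ | hemp
    · rw [ha] at hv; rw [hb]
      cases v <;> simp only [SemValS, unfP] at hv ⊢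
      exact ⟨semValS_of_posSubUnf_closed hneg _ t₁ u₁ h₁ hv.1,
        semValS_of_posSubUnf_closed hneg _ t₂ u₂ h₂ hv.2⟩
    · rw [ha] at hv; rw [hb]
      cases v <;> simp only [SemValS] at hv ⊢
    · rw [ha] at hv; rw [hb]
      cases v <;> simp only [SemValS] at hv ⊢
      obtain ⟨τ, hj, hw⟩ := hv
      obtain ⟨tj, rfl, htj | ⟨uj, huj, htu⟩⟩ := hL (_, τ) (List.mem_of_lookup_eq_some hj)
      · exact absurd hw (htj.not_semValS _ _)
      · exact ⟨.name uj, huj, semValS_of_posSubUnf_closed hneg _ tj uj htu hw⟩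
    · rw [ha] at hv; rw [hb]
      cases v <;> simp only [SemValS] at hv ⊢
      exact hneg s r hsr _ hv
    · exact absurd hv (hemp.not_semValS _ _)

include hNfix in
theorem semComp_of_negSubUnf_closed :
    ∀ k a b, N a b → ∀ e, SemComp Sg k e (.name a) → SemComp Sg k e (.name b)
  | 0, _, _, _, _, _ => by simp [SemComp]
  | k + 1, a, b, hab, e, he => by
    have ih := semComp_of_negSubUnf_closed k
    have hpos : ∀ i ≤ k, ∀ v a b, P a b → SemVal Sg i v (.name a) → SemVal Sg i v (.name b) :=
      fun i _ => semValS_of_posSubUnf_closed hPfix (semComp_of_negSubUnf_closed i)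
    rcases hNfix a b hab with ⟨t₁, s₂, u₁, r₂, ha, hb, hut, hsr⟩ | ⟨t, u, ha, hb, htu⟩ |
      ⟨L, K, ha, hb, hK⟩ | ⟨t, ha, hemp⟩ | hfull
    · refine semComp_succ_of_semTerm (ih a b hab) (fun e => ?_) he
      exact semTerm_arrow_mono ha hb (fun i hi v => hpos i hi v u₁ t₁ hut) (ih s₂ r₂ hsr)
    · refine semComp_succ_of_semTerm (ih a b hab) (fun e => ?_) he
      exact semTerm_up_mono ha hb (fun v => hpos k le_rfl v t u htu)
    · refine semComp_succ_of_semTerm (ih a b hab) (fun e => ?_) he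
      refine semTerm_withRec_mono ha hb fun p hp => ?_
      obtain ⟨rj, hrj, sj, hsj, hsr⟩ := hK p hp
      exact ⟨rj, hrj, sj, hsj, ih sj rj hsr⟩
    · exact hemp.semComp_up ha _ e he
    · exact hfull.semComp _ e he

end Soundness

/-- Soundness of syntactic subtyping:
(1) if `t ≤ u` (as a circular derivation) then for all `k` and `v`, `v ∈_k t`
implies `v ∈_k u`, and hence `t ⊆ u` semantically;
(2) if `s ≤ r` then for all `k` and `e`, `e ∈_k s` implies `e ∈_k r`, and
hence `s ⊆ r` semantically. -/
theorem subtyping_sound (Sg : Signature) (hN : SigNormal Sg) :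
    (∀ t u : String, PosSub Sg t u →
      (∀ (k : ℕ) (v : Val), SemVal Sg k v (.name t) → SemVal Sg k v (.name u)) ∧
      SemSubPos Sg t u) ∧
    (∀ s r : String, NegSub Sg s r →
      (∀ (k : ℕ) (e : Comp), SemComp Sg k e (.name s) → SemComp Sg k e (.name r)) ∧
      SemSubNeg Sg s r) := by
  have pos : ∀ t u, PosSub Sg t u → ∀ k v, SemVal Sg k v (.name t) → SemVal Sg k v (.name u) := by
    rintro t u ⟨P, N, hPfix, hNfix, htu⟩ k v
    exact semValS_of_posSubUnf_closed hPfix (semComp_of_negSubUnf_closed hPfix hNfix k) v t u htu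
  have neg : ∀ s r, NegSub Sg s r →
      ∀ k e, SemComp Sg k e (.name s) → SemComp Sg k e (.name r) := by
    rintro s r ⟨P, N, hPfix, hNfix, hsr⟩ k
    exact semComp_of_negSubUnf_closed hPfix hNfix k s r hsr
  exact ⟨fun t u h => ⟨pos t u h, fun v hv k => pos t u h k v (hv k)⟩,
    fun s r h => ⟨neg s r h, fun e he k => neg s r h k e (he k)⟩⟩

end CBPV
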